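/- arXiv:1112.0856 — 5 statements merged into one kernel-verified Lean document; each statement's English description precedes it below -/
import Mathlib

section
/- Let W be a finite Coxeter group, H a subgroup of W and X = W/H the set of left cosets of H in W. Then H is a modular subgroup of W if and only if W_T(q) = H_T(q) · X_T(q), where W_T(q) = Σ_{w∈W} q^{ℓ_T(w)}, H_T(q) = Σ_{h∈H} q^{ℓ_T(h)} and X_T(q) = Σ_{x∈X} q^{ℓ_T(x)}. -/
/-!
Statement 0: Let W be a finite Coxeter group, H a subgroup of W and X = W/H the set
of left cosets of H in W.  Then H is a modular subgroup of W if and only if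
W_T(q) = H_T(q) · X_T(q).
-/

attribute [local instance] Classical.propDecidable

/-- The absolute length of `w` with respect to a set `T`: the minimum length of a word
for `w` in the alphabet `T`. -/
noncomputable def absLength {W : Type*} [Group W] (T : Set W) (w : W) : ℕ :=
  sInf {n | ∃ l : List W, (∀ t ∈ l, t ∈ T) ∧ l.prod = w ∧ l.length = n}

/-- The absolute order: `u ≤_T v` iff `ℓ_T(u) + ℓ_T(v u⁻¹) = ℓ_T(v)`. -/
def absLe {W : Type*} [Group W] (T : Set W) (u v : W) : Prop :=
  absLength T u + absLength T (v * u⁻¹) = absLength T v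

/-- The absolute length of a left coset `x ∈ W/H`: the minimum of `ℓ_T` over `x`. -/
noncomputable def cosetLength {W : Type*} [Group W] (T : Set W) (H : Subgroup W)
    (x : W ⧸ H) : ℕ :=
  sInf {n | ∃ w : W, (w : W ⧸ H) = x ∧ absLength T w = n}

/-- `H` is a modular subgroup of `W` (w.r.t. the reflection set `T`) if every left coset
of `H` in `W` has a minimum element in the absolute order. -/
def IsModularSubgroup {W : Type*} [Group W] (T : Set W) (H : Subgroup W) : Prop :=
  ∀ w : W, ∃ m : W, (m : W ⧸ H) = (w : W ⧸ H) ∧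
    ∀ u : W, (u : W ⧸ H) = (w : W ⧸ H) → absLe T m u


/-!
Reflections generate `W` and are closed under conjugation, so `ℓ_T` is subadditive and
conjugation invariant. Pick in every coset `x` a representative `n x` of minimal absolute length.
Then `(x, h) ↦ n x * h` is a bijection `(W ⧸ H) × H ≃ W` along which
`ℓ_T(n x * h) ≤ ℓ_T(x) + ℓ_T(h)`, so `W_T = H_T · X_T` holds iff all these inequalities are
equalities (compare the values at `q = 2`). By conjugation invariance, equality for all `h` says
that `n x ≤_T u` for every `u ∈ x`. Conversely a minimum `m` of `x` satisfies
`ℓ_T(m) + ℓ_T(n x * m⁻¹) = ℓ_T(n x) ≤ ℓ_T(m)`, hence `m = n x`.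
-/

open Polynomial

section AbsLength

variable {W : Type*} [Group W] {T : Set W}

lemma absLength_list_prod_le {l : List W} (hl : ∀ t ∈ l, t ∈ T) :
    absLength T l.prod ≤ l.length :=
  Nat.sInf_le ⟨l, hl, rfl, rfl⟩

lemma exists_list_length_eq_absLength (hT : Submonoid.closure T = ⊤) (w : W) :
    ∃ l : List W, (∀ t ∈ l, t ∈ T) ∧ l.prod = w ∧ l.length = absLength T w := by
  obtain ⟨l, hl, hw⟩ := Submonoid.exists_list_of_mem_closure (hT ▸ Submonoid.mem_top w)
  exact Nat.sInf_mem
    (s := {n | ∃ l : List W, (∀ t ∈ l, t ∈ T) ∧ l.prod = w ∧ l.length = n})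
    ⟨l.length, l, hl, hw, rfl⟩

lemma eq_one_of_absLength_eq_zero (hT : Submonoid.closure T = ⊤) {w : W}
    (hw : absLength T w = 0) : w = 1 := by
  obtain ⟨l, -, rfl, hl⟩ := exists_list_length_eq_absLength hT w
  rw [hw, List.length_eq_zero_iff] at hl
  simp [hl]

lemma absLength_mul_le (hT : Submonoid.closure T = ⊤) (u v : W) :
    absLength T (u * v) ≤ absLength T u + absLength T v := by
  obtain ⟨lu, hlu, rfl, hu⟩ := exists_list_length_eq_absLength hT u
  obtain ⟨lv, hlv, rfl, hv⟩ := exists_list_length_eq_absLength hT v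
  rw [← hu, ← hv, ← List.length_append, ← List.prod_append]
  exact absLength_list_prod_le (List.forall_mem_append.2 ⟨hlu, hlv⟩)

variable (hT : Submonoid.closure T = ⊤) (hconj : ∀ t ∈ T, ∀ w : W, w * t * w⁻¹ ∈ T)
include hT hconj

lemma absLength_conj_le (w u : W) : absLength T (w * u * w⁻¹) ≤ absLength T u := by
  obtain ⟨l, hl, rfl, hu⟩ := exists_list_length_eq_absLength hT u
  rw [← MulAut.conj_apply, map_list_prod, ← hu, ← List.length_map (MulAut.conj w)]
  exact absLength_list_prod_le (by simpa using fun t ht => hconj t (hl t ht) w)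

lemma absLength_conj (w u : W) : absLength T (w * u * w⁻¹) = absLength T u :=
  (absLength_conj_le hT hconj w u).antisymm <| by
    simpa [mul_assoc] using absLength_conj_le hT hconj w⁻¹ (w * u * w⁻¹)

end AbsLength

section Coset

variable {W : Type*} [Group W] {T : Set W} {H : Subgroup W}

lemma cosetLength_mk_le (w : W) : cosetLength T H w ≤ absLength T w :=
  Nat.sInf_le ⟨w, rfl, rfl⟩

lemma exists_mk_eq_and_absLength_eq_cosetLength (x : W ⧸ H) :
    ∃ w : W, (w : W ⧸ H) = x ∧ absLength T w = cosetLength T H x := by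
  obtain ⟨w, rfl⟩ := QuotientGroup.mk_surjective x
  exact Nat.sInf_mem (s := {n | ∃ u : W, (u : W ⧸ H) = w ∧ absLength T u = n})
    ⟨_, w, rfl, rfl⟩

variable {n : W ⧸ H → W} (hn : ∀ x, (n x : W ⧸ H) = x)
include hn

lemma bijective_section_mul : Function.Bijective fun p : (W ⧸ H) × H => n p.1 * p.2 := by
  constructor
  · rintro ⟨x, h⟩ ⟨y, k⟩ hxy
    obtain rfl : x = y := by
      simpa [QuotientGroup.mk_mul_of_mem, hn] using congrArg ((↑) : W → W ⧸ H) hxy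
    simpa using hxy
  · intro w
    exact ⟨(w, ⟨(n w)⁻¹ * w, QuotientGroup.eq.mp (hn w)⟩), mul_inv_cancel_left _ _⟩

variable (hmin : ∀ x, absLength T (n x) = cosetLength T H x)
include hmin

theorem isModularSubgroup_iff_absLength_mul_eq_add (hT : Submonoid.closure T = ⊤)
    (hconj : ∀ t ∈ T, ∀ w : W, w * t * w⁻¹ ∈ T) :
    IsModularSubgroup T H ↔
      ∀ x (h : H), absLength T (n x * h) = cosetLength T H x + absLength T h := by
  constructor
  · intro hmod x h
    obtain ⟨m, hmx, hm⟩ := hmod (n x)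
    rw [hn] at hmx
    obtain rfl : n x = m := by
      have hle := cosetLength_mk_le (T := T) (H := H) m
      have hnm : absLe T m (n x) := hm (n x) rfl
      rw [hmx, ← hmin] at hle
      rw [absLe] at hnm
      exact mul_inv_eq_one.mp (eq_one_of_absLength_eq_zero hT (by omega))
    have hmh : absLe T (n x) (n x * h) := hm _ (QuotientGroup.mk_mul_of_mem _ h.2)
    rwa [absLe, absLength_conj hT hconj, hmin, eq_comm] at hmh
  · intro hadd w
    refine ⟨n w, hn w, fun u hu => ?_⟩
    obtain ⟨h, rfl⟩ : ∃ h : H, n w * h = u :=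
      ⟨⟨_, QuotientGroup.eq.mp ((hn w).trans hu.symm)⟩, mul_inv_cancel_left _ _⟩
    rw [absLe, absLength_conj hT hconj, hadd, hmin]

end Coset

theorem Polynomial.sum_X_pow_eq_sum_X_pow_iff {R ι : Type*} [CommSemiring R] [PartialOrder R]
    [IsStrictOrderedRing R] (s : Finset ι) {f g : ι → ℕ} (hfg : ∀ i ∈ s, f i ≤ g i) :
    ∑ i ∈ s, (X : R[X]) ^ f i = ∑ i ∈ s, X ^ g i ↔ ∀ i ∈ s, f i = g i := by
  refine ⟨fun h => ?_, fun h => Finset.sum_congr rfl fun i hi => by rw [h i hi]⟩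
  have h2 : ∑ i ∈ s, (2 : R) ^ f i = ∑ i ∈ s, (2 : R) ^ g i := by
    simpa [eval_finsetSum] using congrArg (eval 2) h
  have hle i (hi : i ∈ s) : (2 : R) ^ f i ≤ 2 ^ g i := pow_le_pow_right₀ one_le_two (hfg i hi)
  exact fun i hi =>
    (pow_right_strictMono₀ one_lt_two).injective ((Finset.sum_eq_sum_iff_of_le hle).mp h2 i hi)

theorem sum_X_pow_absLength_eq_mul_iff {R W : Type*} [CommSemiring R] [PartialOrder R]
    [IsStrictOrderedRing R] [Group W] [Fintype W] {T : Set W} {H : Subgroup W}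
    (hT : Submonoid.closure T = ⊤) {n : W ⧸ H → W} (hn : ∀ x, (n x : W ⧸ H) = x)
    (hmin : ∀ x, absLength T (n x) = cosetLength T H x) :
    (∑ w : W, (X : R[X]) ^ absLength T w) =
        (∑ h : H, X ^ absLength T (h : W)) * (∑ x : W ⧸ H, X ^ cosetLength T H x) ↔
      ∀ x (h : H), absLength T (n x * h) = cosetLength T H x + absLength T h := by
  have hW : ∑ w : W, (X : R[X]) ^ absLength T w =
      ∑ p : (W ⧸ H) × H, X ^ absLength T (n p.1 * p.2) :=
    (Fintype.sum_bijective _ (bijective_section_mul hn) _ _ fun _ => rfl).symm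
  have hHX : (∑ h : H, (X : R[X]) ^ absLength T (h : W)) *
      (∑ x : W ⧸ H, X ^ cosetLength T H x) =
      ∑ p : (W ⧸ H) × H, X ^ (cosetLength T H p.1 + absLength T p.2) := by
    simp_rw [Fintype.sum_prod_type, mul_comm, Finset.sum_mul_sum, pow_add]
  rw [hW, hHX, Polynomial.sum_X_pow_eq_sum_X_pow_iff _ fun p _ => ?_]
  · simp [Prod.forall]
  · rw [← hmin]
    exact absLength_mul_le hT _ _

namespace CoxeterSystem

variable {B W : Type*} [Group W] {M : CoxeterMatrix B} (cs : CoxeterSystem M W)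

theorem submonoid_closure_setOf_isReflection :
    Submonoid.closure {t | cs.IsReflection t} = ⊤ :=
  top_unique <| cs.submonoid_closure_range_simple.symm.trans_le <|
    Submonoid.closure_mono <| Set.range_subset_iff.2 cs.isReflection_simple

end CoxeterSystem

theorem modular_iff_rank_gen_factors {B W : Type*} [Group W] [Fintype W]
    {M : CoxeterMatrix B} (cs : CoxeterSystem M W) (H : Subgroup W)
    (T : Set W) (hT : T = {t | cs.IsReflection t}) :
    IsModularSubgroup T H ↔
      (∑ w : W, (Polynomial.X : Polynomial ℤ) ^ absLength T w) =
        (∑ h : H, (Polynomial.X : Polynomial ℤ) ^ absLength T (h : W)) *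
        (∑ x : W ⧸ H, (Polynomial.X : Polynomial ℤ) ^ cosetLength T H x) := by
  subst hT
  have hgen := cs.submonoid_closure_setOf_isReflection
  have hconj (t) (ht : cs.IsReflection t) (w : W) : cs.IsReflection (w * t * w⁻¹) := ht.conj w
  choose n hn hmin using
    exists_mk_eq_and_absLength_eq_cosetLength (T := {t | cs.IsReflection t}) (H := H)
  rw [isModularSubgroup_iff_absLength_mul_eq_add hn hmin hgen hconj,
    sum_X_pow_absLength_eq_mul_iff hgen hn hmin]
end

section
/- Let W be a Coxeter group, H a modular subgroup of W and X = W/H the set of left cosets of H in W. For x ∈ X let σ(x) denote the minimum element of the coset x in the absolute order Abs(W). Then the map σ : X → W induces a poset isomorphism from Abs(X) onto an order ideal of Abs(W). -/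
/-- The absolute order on X = W/H : `x ≤_T y` iff `y = w x` for some `w ∈ W` with
`ℓ_T(w) = ℓ_T(y) − ℓ_T(x)`. -/
def cosetLe {W : Type*} [Group W] (T : Set W) (H : Subgroup W) (x y : W ⧸ H) : Prop :=
  ∃ w : W, y = w • x ∧ cosetLength T H x + absLength T w = cosetLength T H y

section Aux

variable {W : Type*} [Group W] {T : Set W}

/-- If every element of `W` has a `T`-word, then `absLength` is realized by some word. -/
lemma absLength_spec (hgen : ∀ w : W, ∃ l : List W, (∀ t ∈ l, t ∈ T) ∧ l.prod = w)
    (w : W) : ∃ l : List W, (∀ t ∈ l, t ∈ T) ∧ l.prod = w ∧ l.length = absLength T w := by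
  have hne : {n | ∃ l : List W, (∀ t ∈ l, t ∈ T) ∧ l.prod = w ∧ l.length = n}.Nonempty := by
    obtain ⟨l, hl, hp⟩ := hgen w
    exact ⟨l.length, l, hl, hp, rfl⟩
  have := Nat.sInf_mem hne
  obtain ⟨l, hl, hp, hn⟩ := this
  exact ⟨l, hl, hp, hn⟩

lemma absLength_le_of_word (l : List W) (hl : ∀ t ∈ l, t ∈ T) :
    absLength T l.prod ≤ l.length :=
  Nat.sInf_le ⟨l, hl, rfl, rfl⟩

lemma absLength_mul_le_s2 (hgen : ∀ w : W, ∃ l : List W, (∀ t ∈ l, t ∈ T) ∧ l.prod = w)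
    (a b : W) : absLength T (a * b) ≤ absLength T a + absLength T b := by
  obtain ⟨la, hla, hpa, hna⟩ := absLength_spec hgen a
  obtain ⟨lb, hlb, hpb, hnb⟩ := absLength_spec hgen b
  have hmem : ∀ t ∈ la ++ lb, t ∈ T := by
    intro t ht
    rcases List.mem_append.mp ht with h | h
    exacts [hla t h, hlb t h]
  have h : absLength T ((la ++ lb).prod) ≤ (la ++ lb).length :=
    absLength_le_of_word _ hmem
  rw [List.prod_append, List.length_append, hpa, hpb, hna, hnb] at h
  exact h

lemma absLength_eq_zero_iff (hgen : ∀ w : W, ∃ l : List W, (∀ t ∈ l, t ∈ T) ∧ l.prod = w)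
    (w : W) : absLength T w = 0 ↔ w = 1 := by
  constructor
  · intro h
    obtain ⟨l, _, hp, hn⟩ := absLength_spec hgen w
    rw [h, List.length_eq_zero_iff] at hn
    simp [hn] at hp
    exact hp.symm
  · rintro rfl
    have := absLength_le_of_word (T := T) [] (by simp)
    simpa using Nat.le_zero.mp (by simpa using this)

lemma absLe_refl (hgen : ∀ w : W, ∃ l : List W, (∀ t ∈ l, t ∈ T) ∧ l.prod = w)
    (w : W) : absLe T w w := by
  unfold absLe
  rw [mul_inv_cancel, (absLength_eq_zero_iff hgen 1).mpr rfl, Nat.add_zero]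

lemma absLe_trans (hgen : ∀ w : W, ∃ l : List W, (∀ t ∈ l, t ∈ T) ∧ l.prod = w)
    {u v w : W} (h1 : absLe T u v) (h2 : absLe T v w) : absLe T u w := by
  unfold absLe at *
  have key : absLength T (w * u⁻¹) ≤ absLength T (w * v⁻¹) + absLength T (v * u⁻¹) := by
    have := absLength_mul_le_s2 hgen (w * v⁻¹) (v * u⁻¹)
    simpa [mul_assoc] using this
  have hle : absLength T w ≤ absLength T (w * u⁻¹) + absLength T u := by
    have := absLength_mul_le_s2 hgen (w * u⁻¹) u
    simpa [mul_assoc] using this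
  omega

end Aux

theorem modular_gives_order_ideal {B W : Type*} [Group W]
    {M : CoxeterMatrix B} (cs : CoxeterSystem M W)
    (T : Set W) (hT : T = {t | cs.IsReflection t})
    (H : Subgroup W) (σ : W ⧸ H → W)
    -- H is modular, and σ(x) is the minimum element of the coset x in Abs(W):
    (hσ : ∀ x : W ⧸ H, ((σ x : W) : W ⧸ H) = x ∧
      ∀ u : W, (u : W ⧸ H) = x → absLe T (σ x) u) :
    -- σ is a poset isomorphism from Abs(X) onto its image,
    Function.Injective σ ∧
    (∀ x y : W ⧸ H, cosetLe T H x y ↔ absLe T (σ x) (σ y)) ∧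
    -- and the image of σ is an order ideal of Abs(W):
    (∀ u w : W, absLe T u w → w ∈ Set.range σ → u ∈ Set.range σ) := by
  -- T generates W (simples are reflections)
  have hgen : ∀ w : W, ∃ l : List W, (∀ t ∈ l, t ∈ T) ∧ l.prod = w := by
    intro w
    obtain ⟨ω, rfl⟩ := cs.wordProd_surjective w
    refine ⟨ω.map cs.simple, ?_, rfl⟩
    intro t ht
    obtain ⟨i, _, rfl⟩ := List.mem_map.mp ht
    rw [hT]
    exact cs.isReflection_simple i
  -- key: absLength of σ x equals cosetLength of x
  have hmin : ∀ (x : W ⧸ H) (u : W), (u : W ⧸ H) = x → absLength T (σ x) ≤ absLength T u := by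
    intro x u hu
    have := (hσ x).2 u hu
    unfold absLe at this
    omega
  have hlen : ∀ x : W ⧸ H, cosetLength T H x = absLength T (σ x) := by
    intro x
    apply le_antisymm
    · exact Nat.sInf_le ⟨σ x, (hσ x).1, rfl⟩
    · refine le_csInf ⟨absLength T (σ x), σ x, (hσ x).1, rfl⟩ ?_
      rintro n ⟨w, hw, rfl⟩
      exact hmin x w hw
  -- smul on quotient
  have hsmul : ∀ (w u : W), (w • ((u : W) : W ⧸ H)) = ((w * u : W) : W ⧸ H) := by
    intro w u
    rfl
  refine ⟨?_, ?_, ?_⟩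
  · -- injective
    intro x y h
    rw [← (hσ x).1, ← (hσ y).1, h]
  · -- order isomorphism onto image
    intro x y
    constructor
    · rintro ⟨w, hy, hlens⟩
      -- w * σ x is in coset y
      have hmem : ((w * σ x : W) : W ⧸ H) = y := by
        rw [← hsmul, (hσ x).1, hy]
      have h1 := (hσ y).2 (w * σ x) hmem
      unfold absLe at h1 ⊢
      have h2 : absLength T (w * σ x) ≤ absLength T w + absLength T (σ x) :=
        absLength_mul_le_s2 hgen w (σ x)
      rw [hlen x, hlen y] at hlens
      -- ℓ(σy) + ℓ(wσx (σy)⁻¹) = ℓ(wσx) ≤ ℓ(w)+ℓ(σx) = ℓ(σy), so wσx = σy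
      have h0 : absLength T (w * σ x * (σ y)⁻¹) = 0 := by omega
      have heq : w * σ x * (σ y)⁻¹ = 1 := (absLength_eq_zero_iff hgen _).mp h0
      have heq2 : σ y = w * σ x := by
        have := mul_eq_one_iff_eq_inv.mp heq
        rw [this]; group
      have hw' : σ y * (σ x)⁻¹ = w := by rw [heq2]; group
      rw [hw']
      omega
    · intro h
      unfold absLe at h
      refine ⟨σ y * (σ x)⁻¹, ?_, ?_⟩
      · have key : (σ y * (σ x)⁻¹) * σ x = σ y := by group
        calc y = ((σ y : W) : W ⧸ H) := ((hσ y).1).symm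
          _ = ((σ y * (σ x)⁻¹ * σ x : W) : W ⧸ H) := by rw [key]
          _ = (σ y * (σ x)⁻¹) • ((σ x : W) : W ⧸ H) := (hsmul _ _).symm
          _ = (σ y * (σ x)⁻¹) • x := by rw [(hσ x).1]
      · rw [hlen x, hlen y]
        omega
  · -- order ideal
    rintro u w hle ⟨y, rfl⟩
    refine ⟨(u : W ⧸ H), ?_⟩
    set x : W ⧸ H := (u : W ⧸ H) with hx
    -- v := σ x ≤ u ≤ σ y, and minimality of σ y in its coset forces ℓ(v) = ℓ(u)
    have hvu : absLe T (σ x) u := (hσ x).2 u rfl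
    have hvw : absLe T (σ x) (σ y) := absLe_trans hgen hvu hle
    -- z := (σ y * u⁻¹) * σ x lies in the coset y
    have hzcoset : (((σ y * u⁻¹) * σ x : W) : W ⧸ H) = y := by
      have h1 : ((σ x : W) : W ⧸ H) = (u : W ⧸ H) := (hσ x).1
      have h2 : ((((σ y * u⁻¹) * σ x : W)) : W ⧸ H) = (σ y * u⁻¹ : W) • ((σ x : W) : W ⧸ H) := rfl
      rw [h2, h1]
      have h3 : (σ y * u⁻¹ : W) • ((u : W) : W ⧸ H) = ((σ y * u⁻¹ * u : W) : W ⧸ H) := rfl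
      rw [h3]
      simpa using (hσ y).1
    have hmin' := hmin y _ hzcoset
    have hzle : absLength T ((σ y * u⁻¹) * σ x) ≤ absLength T (σ y * u⁻¹) + absLength T (σ x) :=
      absLength_mul_le_s2 hgen _ _
    unfold absLe at hvu hle
    -- ℓ(σ y) ≤ ℓ(σ y u⁻¹) + ℓ(σ x) = ℓ(σ y) - ℓ(u) + ℓ(σ x), hence ℓ(u) ≤ ℓ(σ x)
    have : absLength T (u * (σ x)⁻¹) = 0 := by omega
    have h1 : u * (σ x)⁻¹ = 1 := (absLength_eq_zero_iff hgen _).mp this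
    have : u = σ x := by
      have := mul_eq_one_iff_eq_inv.mp h1
      rw [this]; group
    exact this.symm
end

section
/- Let (W,S) be a Coxeter system with set of reflections T, let W^+ be its alternating subgroup and fix s_0 ∈ S, with S_0 = {s_0 s : s ∈ S} and T_0 = {s_0 t : t ∈ T}. Then the set of odd palindromes for the pair (W^+, S_0) is equal to T_0. -/
attribute [local instance] Classical.propDecidable

/-- The set of reflections `T` of a Coxeter system. -/
def reflSet {B W : Type*} [Group W] {M : CoxeterMatrix B} (cs : CoxeterSystem M W) :
    Set W := {t | cs.IsReflection t}

/-- The set `T₀ = {s₀ t : t ∈ T}`. -/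
def tZero {B W : Type*} [Group W] {M : CoxeterMatrix B} (cs : CoxeterSystem M W)
    (i₀ : B) : Set W := {w | ∃ t, cs.IsReflection t ∧ w = cs.simple i₀ * t}

/-- The alternating subgroup `W⁺` of a Coxeter system: the kernel of the sign character
(which maps every simple reflection to `−1`). -/
def alternating {B W : Type*} [Group W] {M : CoxeterMatrix B} (cs : CoxeterSystem M W) :
    Subgroup W := cs.lengthParity.ker

/-- `g` is an odd palindrome for the generating set `A`: there is a word
`(a_1, …, a_ℓ)` in the alphabet `A ∪ A⁻¹` for `g` with `ℓ` odd and
`a_i = a_{ℓ−i+1}` for all `i`. -/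
def IsOddPalindrome {G : Type*} [Group G] (A : Set G) (g : G) : Prop :=
  ∃ l : List G, (∀ a ∈ l, a ∈ A ∨ a⁻¹ ∈ A) ∧ l.prod = g ∧ Odd l.length ∧ l.reverse = l

/-!
For every letter `a = s₀ s` or `a = s s₀` of `S₀ ∪ S₀⁻¹` we have `s₀ a = a⁻¹ s₀`, so
`s₀ (a g a) = a⁻¹ (s₀ g) a`: left multiplication by `s₀` turns wrapping a palindrome in a
letter into conjugation. Since `s₀ a` is a reflection for each letter, `s₀` maps odd
palindromes into `T`. Conversely, `s₀ (u s u⁻¹)` is assembled letter by letter along a word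
for `u`.
-/

namespace IsOddPalindrome

variable {G : Type*} [Group G] {A : Set G}

theorem of_mem {a : G} (ha : a ∈ A ∨ a⁻¹ ∈ A) : IsOddPalindrome A a :=
  ⟨[a], by simpa using ha, by simp, by simp, rfl⟩

theorem mul_mul {g a : G} (hg : IsOddPalindrome A g) (ha : a ∈ A ∨ a⁻¹ ∈ A) :
    IsOddPalindrome A (a * g * a) := by
  obtain ⟨l, hl, rfl, hodd, hrev⟩ := hg
  refine ⟨a :: (l ++ [a]), ?_, by simp [mul_assoc], ?_, by simp [hrev]⟩
  · simp only [List.mem_cons, List.mem_append, List.not_mem_nil, or_false]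
    rintro b (rfl | hb | rfl)
    exacts [ha, hl b hb, ha]
  · simpa [Nat.odd_add_one, Nat.not_even_iff_odd] using hodd

@[elab_as_elim]
theorem induction {p : G → Prop} (letter : ∀ a, a ∈ A ∨ a⁻¹ ∈ A → p a)
    (mul_mul : ∀ a g, a ∈ A ∨ a⁻¹ ∈ A → p g → p (a * g * a)) {g : G}
    (hg : IsOddPalindrome A g) : p g := by
  obtain ⟨l, hl, rfl, hodd, hrev⟩ := hg
  induction List.Palindrome.of_reverse_eq hrev with
  | nil => simp at hodd
  | singleton x => simpa using letter x (hl x (by simp))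
  | cons_concat x hpal ih =>
    have hx : x ∈ A ∨ x⁻¹ ∈ A := hl x (by simp)
    have hmid : p _ := ih (fun b hb ↦ hl b (by simp [hb]))
      (by simpa [Nat.odd_add_one, Nat.not_even_iff_odd] using hodd) hpal.reverse_eq
    simpa [mul_assoc] using mul_mul x _ hx hmid

end IsOddPalindrome

namespace CoxeterSystem

variable {B W : Type*} [Group W] {M : CoxeterMatrix B} (cs : CoxeterSystem M W) (i₀ : B)

def sZero : Set W := {x | ∃ i : B, x = cs.simple i₀ * cs.simple i}

theorem mem_sZero_or_inv_mem_iff {a : W} :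
    (a ∈ cs.sZero i₀ ∨ a⁻¹ ∈ cs.sZero i₀) ↔
      ∃ i, a = cs.simple i₀ * cs.simple i ∨ a = cs.simple i * cs.simple i₀ := by
  simp only [sZero, Set.mem_ofPred_eq, inv_eq_iff_eq_inv, mul_inv_rev, inv_simple, ← exists_or]

variable {cs i₀}

theorem simple_mul_eq_inv_mul_simple {a : W} (ha : a ∈ cs.sZero i₀ ∨ a⁻¹ ∈ cs.sZero i₀) :
    cs.simple i₀ * a = a⁻¹ * cs.simple i₀ := by
  obtain ⟨i, rfl | rfl⟩ := (cs.mem_sZero_or_inv_mem_iff i₀).1 ha <;> simp [mul_assoc]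

theorem isReflection_simple_mul {a : W} (ha : a ∈ cs.sZero i₀ ∨ a⁻¹ ∈ cs.sZero i₀) :
    cs.IsReflection (cs.simple i₀ * a) := by
  obtain ⟨i, rfl | rfl⟩ := (cs.mem_sZero_or_inv_mem_iff i₀).1 ha
  · simpa using cs.isReflection_simple i
  · simpa [mul_assoc] using (cs.isReflection_simple i).conj (cs.simple i₀)

theorem isReflection_simple_mul_of_isOddPalindrome {w : W}
    (hw : IsOddPalindrome (cs.sZero i₀) w) :
    cs.IsReflection (cs.simple i₀ * w) := by
  refine hw.induction (fun _ ha ↦ isReflection_simple_mul ha) fun a g ha hg ↦ ?_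
  have hconj : cs.simple i₀ * (a * g * a) = a⁻¹ * (cs.simple i₀ * g) * a⁻¹⁻¹ := by
    rw [inv_inv, ← mul_assoc, ← mul_assoc, simple_mul_eq_inv_mul_simple ha]
    group
  simpa [hconj] using hg.conj a⁻¹

/-- Conjugating `t` by `s i` is realised on `s₀ t` by the letter `s i s₀` and on `t s₀` by
the letter `s₀ s i`, so the two statements have to be proved together. -/
theorem isOddPalindrome_sZero_simple_mul_conj (u : W) (j : B) :
    IsOddPalindrome (cs.sZero i₀) (cs.simple i₀ * (u * cs.simple j * u⁻¹)) ∧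
      IsOddPalindrome (cs.sZero i₀) (u * cs.simple j * u⁻¹ * cs.simple i₀) := by
  induction u using cs.simple_induction_left with
  | one =>
    simp only [one_mul, inv_one, mul_one]
    exact ⟨.of_mem (Or.inl ⟨j, rfl⟩), .of_mem (Or.inr ⟨j, by simp⟩)⟩
  | mul_simple_left u i ih =>
    constructor
    · convert ih.2.mul_mul (a := cs.simple i₀ * cs.simple i) (.inl ⟨i, rfl⟩) using 1
      simp only [mul_inv_rev, inv_simple, mul_assoc, simple_mul_simple_cancel_left]
    · convert ih.1.mul_mul (a := cs.simple i * cs.simple i₀) (.inr ⟨i, by simp⟩) using 1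
      simp only [mul_inv_rev, inv_simple, mul_assoc, simple_mul_simple_cancel_left]

end CoxeterSystem

theorem odd_palindromes_eq_tZero {B W : Type*} [Group W] {M : CoxeterMatrix B}
    (cs : CoxeterSystem M W) (i₀ : B) :
    {w : W | IsOddPalindrome {x | ∃ i : B, x = cs.simple i₀ * cs.simple i} w} =
      tZero cs i₀ := by
  ext w
  constructor
  · intro hw
    exact ⟨cs.simple i₀ * w, cs.isReflection_simple_mul_of_isOddPalindrome hw,
      (cs.simple_mul_simple_cancel_left i₀).symm⟩
  · rintro ⟨t, ⟨u, j, rfl⟩, rfl⟩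
    exact (cs.isOddPalindrome_sZero_simple_mul_conj u j).1
end

section
/- Let (W,S) be a Coxeter system with set of reflections T, alternating subgroup W^+, and fix s_0 ∈ S with T_0 = {s_0 t : t ∈ T}. For every w ∈ W^+: ℓ_{T_0}(w) = ℓ_T(w) if ℓ_{T_0}(w) is even, and ℓ_{T_0}(w) = ℓ_T(w) − 1 if ℓ_{T_0}(w) is odd. -/
attribute [local instance] Classical.propDecidable

/-
Write `s₀` for the fixed simple reflection. Every reflection has odd sign, so every word in `T`
for `w ∈ W⁺` has even length; in particular `ℓ_T(w)` is even. Words in `T` and in `T₀` are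
translated into each other two letters at a time:
`t t' = (s₀ · s₀ t s₀)(s₀ t')` and `(s₀ t)(s₀ t') = (s₀ t s₀) t'`,
with one extra letter `s₀ t = s₀ · t` when a `T₀`-word has odd length. Hence
`ℓ_{T₀}(w) ≤ ℓ_T(w) ≤ ℓ_{T₀}(w) + 1`, and the parity of `ℓ_T(w)` decides which bound is
attained.
-/

section AbsLength

variable {G : Type*} [Group G] {T U : Set G} {w : G}

theorem absLength_le {l : List G} (hl : ∀ x ∈ l, x ∈ T) (hw : l.prod = w) :
    absLength T w ≤ l.length :=
  Nat.sInf_le ⟨l, hl, hw, rfl⟩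

theorem exists_word_length_eq_absLength {l : List G} (hl : ∀ x ∈ l, x ∈ T) (hw : l.prod = w) :
    ∃ l' : List G, (∀ x ∈ l', x ∈ T) ∧ l'.prod = w ∧ l'.length = absLength T w := by
  have hne :
      {n | ∃ l : List G, (∀ x ∈ l, x ∈ T) ∧ l.prod = w ∧ l.length = n}.Nonempty :=
    ⟨l.length, l, hl, hw, rfl⟩
  exact Nat.sInf_mem hne

theorem exists_word_of_even_length
    (hpair : ∀ a ∈ U, ∀ b ∈ U, ∃ c ∈ T, ∃ d ∈ T, a * b = c * d) :
    ∀ l : List G, (∀ x ∈ l, x ∈ U) → Even l.length →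
      ∃ l' : List G, (∀ x ∈ l', x ∈ T) ∧ l'.prod = l.prod ∧ l'.length = l.length
  | [], _, _ => ⟨[], by simp, rfl, rfl⟩
  | [_], _, h => absurd h (by simp)
  | a :: b :: l, hl, h => by
    obtain ⟨c, hc, d, hd, hab⟩ := hpair a (hl a (by simp)) b (hl b (by simp))
    obtain ⟨l', hl', hprod, hlen⟩ := exists_word_of_even_length hpair l
      (fun x hx => hl x (by simp [hx])) (by simpa [parity_simps] using h)
    refine ⟨c :: d :: l', ?_, ?_, by simp [hlen]⟩
    · simp only [List.mem_cons]
      rintro x (rfl | rfl | hx)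
      exacts [hc, hd, hl' x hx]
    · simp only [List.prod_cons, hprod, ← mul_assoc, hab]

end AbsLength

namespace CoxeterSystem

variable {B W : Type*} [Group W] {M : CoxeterMatrix B} {cs : CoxeterSystem M W}

theorem IsReflection.lengthParity_eq {t : W} (ht : cs.IsReflection t) :
    cs.lengthParity t = Multiplicative.ofAdd 1 := by
  obtain ⟨w, i, rfl⟩ := ht
  simp [lengthParity_simple]

theorem lengthParity_prod_of_isReflection {l : List W} (hl : ∀ t ∈ l, cs.IsReflection t) :
    cs.lengthParity l.prod = Multiplicative.ofAdd (l.length : ZMod 2) := by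
  rw [map_list_prod, List.map_congr_left fun t ht => (hl t ht).lengthParity_eq,
    List.map_const', List.prod_replicate, ← ofAdd_nsmul, nsmul_one]

theorem even_length_of_prod_mem_alternating {l : List W} (hl : ∀ t ∈ l, cs.IsReflection t)
    (hw : l.prod ∈ alternating cs) : Even l.length := by
  have h : cs.lengthParity l.prod = Multiplicative.ofAdd 0 := hw
  rw [lengthParity_prod_of_isReflection hl, EmbeddingLike.apply_eq_iff_eq] at h
  exact (ZMod.natCast_eq_zero_iff_even).1 h

variable (cs)

theorem exists_reflection_word (w : W) :
    ∃ l : List W, (∀ x ∈ l, x ∈ reflSet cs) ∧ l.prod = w := by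
  obtain ⟨ω, rfl⟩ := cs.wordProd_surjective w
  refine ⟨ω.map cs.simple, ?_, rfl⟩
  simp only [List.mem_map]
  rintro _ ⟨i, -, rfl⟩
  exact cs.isReflection_simple i

theorem exists_tZero_mul_tZero_eq (i₀ : B) :
    ∀ a ∈ reflSet cs, ∀ b ∈ reflSet cs,
      ∃ c ∈ tZero cs i₀, ∃ d ∈ tZero cs i₀, a * b = c * d := by
  intro a ha b hb
  exact ⟨_, ⟨_, ha.conj (cs.simple i₀), rfl⟩, _, ⟨b, hb, rfl⟩, by simp [mul_assoc]⟩

theorem exists_reflSet_mul_reflSet_eq (i₀ : B) :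
    ∀ a ∈ tZero cs i₀, ∀ b ∈ tZero cs i₀,
      ∃ c ∈ reflSet cs, ∃ d ∈ reflSet cs, a * b = c * d := by
  rintro _ ⟨t, ht, rfl⟩ _ ⟨t', ht', rfl⟩
  refine ⟨_, ht.conj (cs.simple i₀), t', ht', ?_⟩
  simp only [inv_simple, mul_assoc]

theorem exists_reflection_word_of_tZero_word {i₀ : B} {l : List W}
    (hl : ∀ x ∈ l, x ∈ tZero cs i₀) :
    ∃ l' : List W, (∀ x ∈ l', x ∈ reflSet cs) ∧ l'.prod = l.prod ∧
      l'.length ≤ l.length + 1 := by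
  rcases Nat.even_or_odd l.length with h | h
  · obtain ⟨l', hl', hprod, hlen⟩ :=
      exists_word_of_even_length (cs.exists_reflSet_mul_reflSet_eq i₀) l hl h
    exact ⟨l', hl', hprod, by omega⟩
  obtain _ | ⟨a, l⟩ := l
  · simp at h
  obtain ⟨t, ht, rfl⟩ := hl a (by simp)
  obtain ⟨l', hl', hprod, hlen⟩ :=
    exists_word_of_even_length (cs.exists_reflSet_mul_reflSet_eq i₀) l
      (fun x hx => hl x (by simp [hx])) (by simpa [parity_simps] using h)
  refine ⟨cs.simple i₀ :: t :: l', ?_, by simp [hprod, mul_assoc], by simp [hlen]⟩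
  simp only [List.mem_cons]
  rintro x (rfl | rfl | hx)
  exacts [cs.isReflection_simple i₀, ht, hl' x hx]

theorem absLength_reflSet_le_absLength_tZero_add_one {i₀ : B} {w : W} {l : List W}
    (hl : ∀ x ∈ l, x ∈ tZero cs i₀) (hw : l.prod = w) :
    absLength (reflSet cs) w ≤ absLength (tZero cs i₀) w + 1 := by
  obtain ⟨lZ, hlZ, hwZ, hlenZ⟩ := exists_word_length_eq_absLength hl hw
  obtain ⟨l', hl', hwl', hlen'⟩ := cs.exists_reflection_word_of_tZero_word hlZ
  exact hlenZ ▸ (absLength_le hl' (hwl'.trans hwZ)).trans hlen'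

variable {cs}

theorem even_absLength_reflSet {w : W} (hw : w ∈ alternating cs) :
    Even (absLength (reflSet cs) w) := by
  obtain ⟨l, hl, hwl⟩ := cs.exists_reflection_word w
  obtain ⟨lT, hlT, hwT, hlenT⟩ := exists_word_length_eq_absLength hl hwl
  exact hlenT ▸ even_length_of_prod_mem_alternating hlT (hwT ▸ hw)

theorem exists_tZero_word_length_eq_absLength_reflSet (i₀ : B) {w : W}
    (hw : w ∈ alternating cs) :
    ∃ l : List W, (∀ x ∈ l, x ∈ tZero cs i₀) ∧ l.prod = w ∧
      l.length = absLength (reflSet cs) w := by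
  obtain ⟨l, hl, hwl⟩ := cs.exists_reflection_word w
  obtain ⟨lT, hlT, hwT, hlenT⟩ := exists_word_length_eq_absLength hl hwl
  obtain ⟨l', hl', hwl', hlen'⟩ := exists_word_of_even_length
    (cs.exists_tZero_mul_tZero_eq i₀) lT hlT (hlenT ▸ even_absLength_reflSet hw)
  exact ⟨l', hl', hwl'.trans hwT, hlen'.trans hlenT⟩

end CoxeterSystem

theorem length_tZero_eq {B W : Type*} [Group W] {M : CoxeterMatrix B}
    (cs : CoxeterSystem M W) (i₀ : B) :
    ∀ w ∈ alternating cs,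
      (Even (absLength (tZero cs i₀) w) →
        absLength (tZero cs i₀) w = absLength (reflSet cs) w) ∧
      (Odd (absLength (tZero cs i₀) w) →
        absLength (tZero cs i₀) w = absLength (reflSet cs) w - 1) := by
  intro w hw
  obtain ⟨l, hl, hwl, hlen⟩ := CoxeterSystem.exists_tZero_word_length_eq_absLength_reflSet i₀ hw
  have hT₀_le : absLength (tZero cs i₀) w ≤ absLength (reflSet cs) w := hlen ▸ absLength_le hl hwl
  have hT_le := cs.absLength_reflSet_le_absLength_tZero_add_one hl hwl
  obtain ⟨m, hm⟩ := CoxeterSystem.even_absLength_reflSet hw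
  exact ⟨fun ⟨k, hk⟩ => by omega, fun ⟨k, hk⟩ => by omega⟩
end

section
/- Let (W,S) be a Coxeter system with set of reflections T, alternating subgroup W^+, and fix s_0 ∈ S with T_0 = {s_0 t : t ∈ T}. For every w ∈ W^+ the following are equivalent: (i) ℓ_{T_0}(w) is even; (ii) ℓ_T(w) < ℓ_T(s_0 w); (iii) ℓ_T(w) < ℓ_T(w s_0). -/
attribute [local instance] Classical.propDecidable

/-! Since `T` is closed under conjugation, moving every `s₀` of a `T₀`-word `s₀t₁ ⋯ s₀tₖ` to the
front turns it into `s₀ᵏ` times a `T`-word of the same length, and conversely. A product of `k`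
reflections has sign `(-1)ᵏ`, so for `w ∈ W⁺` this gives `ℓ_{T₀}(w) = min(ℓ_T(w), ℓ_T(s₀w))` with
`ℓ_T(w)` even and `ℓ_T(s₀w)` odd: the minimum is even exactly when it is `ℓ_T(w)`. Finally `ws₀` is
conjugate to `s₀w`. -/

open scoped Pointwise

section Words

variable {G : Type*} [Group G] {T : Set G}

def wordLengths (T : Set G) (w : G) : Set ℕ :=
  {n | ∃ l : List G, (∀ t ∈ l, t ∈ T) ∧ l.prod = w ∧ l.length = n}

theorem absLength_eq_sInf_wordLengths (T : Set G) (w : G) :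
    absLength T w = sInf (wordLengths T w) := rfl

theorem wordLengths_subset_conj (hT : ∀ g, ∀ t ∈ T, g * t * g⁻¹ ∈ T) (g w : G) :
    wordLengths T w ⊆ wordLengths T (g * w * g⁻¹) := by
  rintro _ ⟨l, hl, rfl, rfl⟩
  refine ⟨l.map (MulAut.conj g), ?_, (map_list_prod (MulAut.conj g) l).symm, l.length_map _⟩
  simp only [List.mem_map, MulAut.conj_apply]
  rintro _ ⟨t, ht, rfl⟩
  exact hT g t (hl t ht)

theorem wordLengths_conj (hT : ∀ g, ∀ t ∈ T, g * t * g⁻¹ ∈ T) (g w : G) :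
    wordLengths T (g * w * g⁻¹) = wordLengths T w := by
  refine (wordLengths_subset_conj hT g w).antisymm' ?_
  simpa [mul_assoc] using wordLengths_subset_conj hT g⁻¹ (g * w * g⁻¹)

theorem absLength_mul_comm (hT : ∀ g, ∀ t ∈ T, g * t * g⁻¹ ∈ T) (g w : G) :
    absLength T (w * g) = absLength T (g * w) := by
  rw [absLength_eq_sInf_wordLengths, ← wordLengths_conj hT g, mul_assoc, mul_inv_cancel_right]
  rfl

theorem exists_word_of_forall_mem_smul (hT : ∀ g, ∀ t ∈ T, g * t * g⁻¹ ∈ T) (s : G) :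
    ∀ l : List G, (∀ x ∈ l, x ∈ s • T) →
      ∃ l' : List G, (∀ t ∈ l', t ∈ T) ∧ l'.length = l.length ∧ l.prod = s ^ l.length * l'.prod
  | [], _ => ⟨[], by simp, rfl, by simp⟩
  | x :: l, hl => by
    obtain ⟨t, ht, rfl⟩ := hl x List.mem_cons_self
    obtain ⟨l', hl', hlen, hprod⟩ :=
      exists_word_of_forall_mem_smul hT s l fun y hy => hl y (List.mem_cons_of_mem _ hy)
    refine ⟨(s ^ l.length)⁻¹ * t * s ^ l.length :: l', ?_, by simp [hlen], ?_⟩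
    · simp only [List.mem_cons, forall_eq_or_imp]
      exact ⟨by simpa using hT (s ^ l.length)⁻¹ t ht, hl'⟩
    · simp [hprod, pow_succ', mul_assoc]

theorem exists_smul_word_of_forall_mem (hT : ∀ g, ∀ t ∈ T, g * t * g⁻¹ ∈ T) (s : G) :
    ∀ l : List G, (∀ t ∈ l, t ∈ T) →
      ∃ l' : List G, (∀ x ∈ l', x ∈ s • T) ∧ l'.length = l.length ∧
        l'.prod = s ^ l.length * l.prod
  | [], _ => ⟨[], by simp, rfl, by simp⟩
  | t :: l, hl => by
    obtain ⟨l', hl', hlen, hprod⟩ :=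
      exists_smul_word_of_forall_mem hT s l fun y hy => hl y (List.mem_cons_of_mem _ hy)
    refine ⟨s * (s ^ l.length * t * (s ^ l.length)⁻¹) :: l', ?_, by simp [hlen], ?_⟩
    · simp only [List.mem_cons, forall_eq_or_imp]
      exact ⟨Set.smul_mem_smul_set (hT _ t (hl t List.mem_cons_self)), hl'⟩
    · simp [hprod, pow_succ', mul_assoc]

theorem mem_wordLengths_smul_iff (hT : ∀ g, ∀ t ∈ T, g * t * g⁻¹ ∈ T) (s w : G) (n : ℕ) :
    n ∈ wordLengths (s • T) w ↔ n ∈ wordLengths T ((s ^ n)⁻¹ * w) := by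
  constructor
  · rintro ⟨l, hl, rfl, rfl⟩
    obtain ⟨l', hl', hlen, hprod⟩ := exists_word_of_forall_mem_smul hT s l hl
    exact ⟨l', hl', by rw [hprod, inv_mul_cancel_left], hlen⟩
  · rintro ⟨l, hl, hprod, rfl⟩
    obtain ⟨l', hl', hlen, hprod'⟩ := exists_smul_word_of_forall_mem hT s l hl
    exact ⟨l', hl', by rw [hprod', hprod, mul_inv_cancel_left], hlen⟩

end Words

theorem even_min_iff_lt {a b : ℕ} (ha : Even a) (hb : Odd b) : Even (min a b) ↔ a < b := by
  obtain ⟨a, rfl⟩ := ha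
  obtain ⟨b, rfl⟩ := hb
  rw [Nat.even_iff]
  omega

section Coxeter

variable {B W : Type*} [Group W] {M : CoxeterMatrix B} (cs : CoxeterSystem M W)

theorem reflSet_conj_mem : ∀ g, ∀ t ∈ reflSet cs, g * t * g⁻¹ ∈ reflSet cs :=
  fun g _ ht => CoxeterSystem.IsReflection.conj ht g

theorem tZero_eq_smul (i₀ : B) : tZero cs i₀ = cs.simple i₀ • reflSet cs := by
  ext
  simp [tZero, reflSet, Set.mem_smul_set, eq_comm]

theorem wordLengths_reflSet_nonempty (w : W) : (wordLengths (reflSet cs) w).Nonempty := by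
  obtain ⟨ω, rfl⟩ := cs.wordProd_surjective w
  refine ⟨_, ω.map cs.simple, ?_, rfl, rfl⟩
  simpa [reflSet] using fun i _ => cs.isReflection_simple i

theorem lengthParity_list_prod {l : List W} (hl : ∀ t ∈ l, t ∈ reflSet cs) :
    cs.lengthParity l.prod = Multiplicative.ofAdd (l.length : ZMod 2) := by
  induction l with
  | nil => simp
  | cons t l ih =>
    obtain ⟨⟨u, i, rfl⟩, hl'⟩ := List.forall_mem_cons.mp hl
    simp [cs.lengthParity_simple, ih hl', ← ofAdd_add, add_comm]

theorem mem_alternating_iff_even {w : W} {n : ℕ} (hn : n ∈ wordLengths (reflSet cs) w) :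
    w ∈ alternating cs ↔ Even n := by
  obtain ⟨l, hl, rfl, rfl⟩ := hn
  rw [alternating, MonoidHom.mem_ker, lengthParity_list_prod cs hl, ← ofAdd_zero,
    Multiplicative.ofAdd.injective.eq_iff, ZMod.natCast_eq_zero_iff_even]

theorem mem_alternating_iff_even_absLength (w : W) :
    w ∈ alternating cs ↔ Even (absLength (reflSet cs) w) :=
  mem_alternating_iff_even cs (Nat.sInf_mem (wordLengths_reflSet_nonempty cs w))

theorem simple_mul_mem_alternating_iff (i : B) (w : W) :
    cs.simple i * w ∈ alternating cs ↔ w ∉ alternating cs := by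
  simp only [alternating, MonoidHom.mem_ker, map_mul, cs.lengthParity_simple]
  generalize cs.lengthParity w = x
  revert x
  decide

theorem simple_pow_of_even (i : B) {n : ℕ} (hn : Even n) : cs.simple i ^ n = 1 := by
  obtain ⟨k, rfl⟩ := hn
  rw [← two_mul, pow_mul, cs.simple_sq, one_pow]

theorem simple_pow_of_odd (i : B) {n : ℕ} (hn : Odd n) : cs.simple i ^ n = cs.simple i := by
  obtain ⟨k, rfl⟩ := hn
  rw [pow_succ, pow_mul, cs.simple_sq, one_pow, one_mul]

theorem wordLengths_tZero (i₀ : B) {w : W} (hw : w ∈ alternating cs) :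
    wordLengths (tZero cs i₀) w =
      wordLengths (reflSet cs) w ∪ wordLengths (reflSet cs) (cs.simple i₀ * w) := by
  ext n
  rw [tZero_eq_smul, mem_wordLengths_smul_iff (reflSet_conj_mem cs), Set.mem_union]
  have hs₀w : cs.simple i₀ * w ∉ alternating cs := fun h =>
    (simple_mul_mem_alternating_iff cs i₀ w).mp h hw
  rcases Nat.even_or_odd n with hn | hn
  · have hn' : n ∉ wordLengths (reflSet cs) (cs.simple i₀ * w) := fun h =>
      hs₀w ((mem_alternating_iff_even cs h).mpr hn)
    simp [simple_pow_of_even cs i₀ hn, hn']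
  · have hn' : n ∉ wordLengths (reflSet cs) w := fun h =>
      Nat.not_even_iff_odd.mpr hn ((mem_alternating_iff_even cs h).mp hw)
    simp [simple_pow_of_odd cs i₀ hn, hn']

theorem absLength_tZero (i₀ : B) {w : W} (hw : w ∈ alternating cs) :
    absLength (tZero cs i₀) w =
      min (absLength (reflSet cs) w) (absLength (reflSet cs) (cs.simple i₀ * w)) := by
  rw [absLength_eq_sInf_wordLengths, wordLengths_tZero cs i₀ hw,
    csInf_union (OrderBot.bddBelow _) (wordLengths_reflSet_nonempty cs w)
      (OrderBot.bddBelow _) (wordLengths_reflSet_nonempty cs _)]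
  rfl

end Coxeter

theorem even_iff_length_lt {B W : Type*} [Group W] {M : CoxeterMatrix B}
    (cs : CoxeterSystem M W) (i₀ : B) :
    ∀ w ∈ alternating cs,
      (Even (absLength (tZero cs i₀) w) ↔
        absLength (reflSet cs) w < absLength (reflSet cs) (cs.simple i₀ * w)) ∧
      (Even (absLength (tZero cs i₀) w) ↔
        absLength (reflSet cs) w < absLength (reflSet cs) (w * cs.simple i₀)) := by
  intro w hw
  have hs₀w : ¬Even (absLength (reflSet cs) (cs.simple i₀ * w)) := fun h =>
    (simple_mul_mem_alternating_iff cs i₀ w).mp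
      ((mem_alternating_iff_even_absLength cs _).mpr h) hw
  have key : Even (absLength (tZero cs i₀) w) ↔
      absLength (reflSet cs) w < absLength (reflSet cs) (cs.simple i₀ * w) := by
    rw [absLength_tZero cs i₀ hw]
    exact even_min_iff_lt ((mem_alternating_iff_even_absLength cs w).mp hw)
      (Nat.not_even_iff_odd.mp hs₀w)
  exact ⟨key, by rwa [absLength_mul_comm (reflSet_conj_mem cs)]⟩
end
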